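/- arXiv:2102.02479 — 3 statements merged into one kernel-verified Lean document; each statement's English description precedes it below -/
import Mathlib

section
/- Let C be an abelian category having enough projective objects, and let F₀ be a generating class of objects of C consisting of projective objects (i.e. every object of C receives an epimorphism from an object of F₀). If an object V of C has finite projective dimension, then pd_C(V) = max{n : Ext^n_C(V,F) ≠ 0 for some object F in F₀}. -/
open TensorProduct CategoryTheory

universe u

namespace QuesProj

/-! ## Projective dimension via Ext -/

/-- The projective dimension of an object of an abelian category with enough projectives:
the supremum of the degrees in which some `Ext` group out of it is nonzero. -/
noncomputable def extPD {C : Type (u+1)} [Category.{u} C] [Abelian C] [EnoughProjectives C]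
    (V : C) : ℕ∞ :=
  sSup {n : ℕ∞ | ∃ m : ℕ, n = (m : ℕ∞) ∧
    ∃ W : C, Nontrivial (((Ext ℤ C m).obj (Opposite.op V)).obj W)}

/-! ## Comodules, comodule algebras and Hopf-Galois objects -/

section Coaction

variable (k : Type u) [Field k]
variable (A : Type u) [AddCommGroup A] [Module k A] [Coalgebra k A]
variable (V : Type u) [AddCommGroup V] [Module k V]

/-- A right `A`-comodule structure on `V`. -/
structure RightCoaction where
  ρ : V →ₗ[k] V ⊗[k] A
  coassoc : (TensorProduct.assoc k V A A).toLinearMap ∘ₗ ρ.rTensor A ∘ₗ ρ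
      = (Coalgebra.comul (R := k) (A := A)).lTensor V ∘ₗ ρ
  counit_comp : (TensorProduct.rid k V).toLinearMap ∘ₗ
      (Coalgebra.counit (R := k) (A := A)).lTensor V ∘ₗ ρ = LinearMap.id

variable {k A V}

/-- A linear map between right comodules is colinear. -/
def IsColinear {W : Type u} [AddCommGroup W] [Module k W]
    (coV : RightCoaction k A V) (coW : RightCoaction k A W) (f : V →ₗ[k] W) : Prop :=
  coW.ρ ∘ₗ f = f.rTensor A ∘ₗ coV.ρ

end Coaction

section ComodAlg

variable (k : Type u) [Field k]
variable (A : Type u) [Ring A] [Bialgebra k A]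
variable (R : Type u) [Ring R] [Algebra k R]

/-- A right `A`-comodule algebra structure on `R`. -/
structure RightComodAlg where
  ρ : R →ₗ[k] R ⊗[k] A
  coassoc : (TensorProduct.assoc k R A A).toLinearMap ∘ₗ ρ.rTensor A ∘ₗ ρ
      = (Coalgebra.comul (R := k) (A := A)).lTensor R ∘ₗ ρ
  counit_comp : (TensorProduct.rid k R).toLinearMap ∘ₗ
      (Coalgebra.counit (R := k) (A := A)).lTensor R ∘ₗ ρ = LinearMap.id
  map_one : ρ 1 = 1
  map_mul : ∀ x y : R, ρ (x * y) = ρ x * ρ y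

/-- A left `A`-comodule algebra structure on `R`. -/
structure LeftComodAlg where
  lam : R →ₗ[k] A ⊗[k] R
  coassoc : (TensorProduct.assoc k A A R).toLinearMap ∘ₗ
      (Coalgebra.comul (R := k) (A := A)).rTensor R ∘ₗ lam = lam.lTensor A ∘ₗ lam
  counit_comp : (TensorProduct.lid k R).toLinearMap ∘ₗ
      (Coalgebra.counit (R := k) (A := A)).rTensor R ∘ₗ lam = LinearMap.id
  map_one : lam 1 = 1
  map_mul : ∀ x y : R, lam (x * y) = lam x * lam y

variable {k A R}

/-- The coaction of a right comodule algebra, as a `RightCoaction`. -/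
def RightComodAlg.toCoaction (c : RightComodAlg k A R) : RightCoaction k A R :=
  ⟨c.ρ, c.coassoc, c.counit_comp⟩

/-- The canonical (Galois) map `R ⊗ R → A ⊗ R` of a left comodule algebra,
`x ⊗ y ↦ x₍₋₁₎ ⊗ x₍₀₎y`. -/
noncomputable def LeftComodAlg.can (c : LeftComodAlg k A R) : R ⊗[k] R →ₗ[k] A ⊗[k] R :=
  (LinearMap.mul' k R).lTensor A ∘ₗ (TensorProduct.assoc k A R R).toLinearMap ∘ₗ
    c.lam.rTensor R

/-- The canonical (Galois) map `R ⊗ R → R ⊗ A` of a right comodule algebra,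
`x ⊗ y ↦ xy₍₀₎ ⊗ y₍₁₎`. -/
noncomputable def RightComodAlg.can (c : RightComodAlg k A R) : R ⊗[k] R →ₗ[k] R ⊗[k] A :=
  (LinearMap.mul' k R).rTensor A ∘ₗ (TensorProduct.assoc k R R A).symm.toLinearMap ∘ₗ
    c.ρ.lTensor R

/-- `R` is a left `A`-Galois object via the left comodule algebra structure `c`:
it is nonzero and the canonical map is bijective. -/
def LeftComodAlg.IsGalois (c : LeftComodAlg k A R) : Prop :=
  Nontrivial R ∧ Function.Bijective c.can

/-- `R` is a right `A`-Galois object via the right comodule algebra structure `c`. -/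
def RightComodAlg.IsGalois (c : RightComodAlg k A R) : Prop :=
  Nontrivial R ∧ Function.Bijective c.can

/-- `R` is a left or right `A`-Galois object. -/
def IsGaloisObject (k A R : Type u) [Field k] [Ring A] [Bialgebra k A] [Ring R]
    [Algebra k R] : Prop :=
  (∃ c : LeftComodAlg k A R, c.IsGalois) ∨ (∃ c : RightComodAlg k A R, c.IsGalois)

end ComodAlg

/-! ## Trivial module, cohomological dimensions, smoothness -/

section Trivial

variable (k : Type u) [Field k] (A : Type u) [Ring A] [Bialgebra k A]

/-- The trivial module of a bialgebra: the base field with action through the counit. -/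
def TrivialModule (_A : Type u) : Type u := k

instance : AddCommGroup (TrivialModule k A) := inferInstanceAs (AddCommGroup k)

noncomputable instance : Module A (TrivialModule k A) :=
  Module.compHom k (Bialgebra.counitAlgHom k A).toRingHom

/-- The cohomological dimension of a Hopf algebra: the projective dimension of the
trivial module. -/
noncomputable def cdHopf : ℕ∞ := extPD (ModuleCat.of A (TrivialModule k A))

end Trivial

section Bimodule

attribute [local instance] TensorProduct.Algebra.module

variable (k : Type u) [Field k] (R : Type u) [Ring R] [Algebra k R]

/-- `k`-scalars commute appropriately with the enveloping algebra action. -/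
noncomputable def envTower : IsScalarTower k (R ⊗[k] Rᵐᵒᵖ) R := by
  constructor
  intro c e v
  show TensorProduct.Algebra.moduleAux (c • e) v = c • TensorProduct.Algebra.moduleAux e v
  rw [map_smul]
  rfl

attribute [local instance] envTower

/-- The Hochschild cohomological dimension of a `k`-algebra `R`: the projective dimension
of `R` in the category of `R`-bimodules, i.e. of modules over `R ⊗ Rᵐᵒᵖ`. -/
noncomputable def cdAlg : ℕ∞ := extPD (ModuleCat.of (R ⊗[k] Rᵐᵒᵖ) R)

/-- `FgProjDimLE S n M` says that the `S`-module `M` admits a resolution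
`0 → P_n → ⋯ → P_0 → M → 0` by finitely generated projective `S`-modules. -/
def FgProjDimLE (S : Type u) [Ring S] :
    ℕ → (M : Type u) → [AddCommGroup M] → [Module S M] → Prop
  | 0, M, _, _ => Module.Finite S M ∧ Module.Projective S M
  | (n+1), M, _, _ => ∃ (P : Type u) (_ : AddCommGroup P) (_ : Module S P) (φ : P →ₗ[S] M),
      Module.Finite S P ∧ Module.Projective S P ∧ Function.Surjective φ ∧
        FgProjDimLE S n (LinearMap.ker φ)

/-- A `k`-algebra `R` is homologically smooth if `R` admits a finite resolution by finitely
generated projective `R`-bimodules. -/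
def IsHomSmooth : Prop :=
  ∃ n : ℕ, FgProjDimLE (R ⊗[k] Rᵐᵒᵖ) n R

end Bimodule


/-! ## The trivial coaction and tensor product coactions -/

section UnitTensor

variable (k : Type u) [Field k] (A : Type u) [Ring A] [Bialgebra k A]

/-- The coaction on the monoidal unit `k`. -/
noncomputable def unitCoactMap : k →ₗ[k] k ⊗[k] A :=
  (Algebra.linearMap k A).lTensor k ∘ₗ (TensorProduct.lid k k).symm.toLinearMap

/-- The trivial right coaction on `k`. -/
noncomputable def unitCoaction : RightCoaction k A k where
  ρ := unitCoactMap k A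
  coassoc := by
    unfold unitCoactMap
    apply LinearMap.ext_ring
    simp [Bialgebra.comul_one, Algebra.TensorProduct.one_def]
  counit_comp := by
    unfold unitCoactMap
    apply LinearMap.ext_ring
    simp [Bialgebra.counit_one]

variable {k A}

/-- The canonical coaction on the tensor product of two comodules. -/
noncomputable def tensorCoactMap {V W : Type u} [AddCommGroup V] [Module k V]
    [AddCommGroup W] [Module k W] (ρV : V →ₗ[k] V ⊗[k] A) (ρW : W →ₗ[k] W ⊗[k] A) :
    V ⊗[k] W →ₗ[k] (V ⊗[k] W) ⊗[k] A :=
  (LinearMap.mul' k A).lTensor (V ⊗[k] W) ∘ₗ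
    (TensorProduct.tensorTensorTensorComm k V A W A).toLinearMap ∘ₗ TensorProduct.map ρV ρW

end UnitTensor

/-! ## Haar integrals, modular functionals and averaging -/


section Haar

variable {k : Type u} [Field k] {A : Type u} [Ring A] [HopfAlgebra k A]

/-- Convolution product of two linear functionals on a coalgebra. -/
noncomputable def convF (ψ φ : A →ₗ[k] k) : A →ₗ[k] k :=
  LinearMap.mul' k k ∘ₗ TensorProduct.map ψ φ ∘ₗ Coalgebra.comul

/-- Convolution `ψ ∗ g` of a functional with a linear endomap. -/
noncomputable def convL (ψ : A →ₗ[k] k) (g : A →ₗ[k] A) : A →ₗ[k] A :=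
  (TensorProduct.lid k A).toLinearMap ∘ₗ TensorProduct.map ψ g ∘ₗ Coalgebra.comul

/-- Convolution `g ∗ ψ` of a linear endomap with a functional. -/
noncomputable def convR (g : A →ₗ[k] A) (ψ : A →ₗ[k] k) : A →ₗ[k] A :=
  (TensorProduct.rid k A).toLinearMap ∘ₗ TensorProduct.map g ψ ∘ₗ Coalgebra.comul

/-- `h : A → k` is a Haar integral: `h(a₍₁₎)a₍₂₎ = h(a)1 = h(a₍₂₎)a₍₁₎` and `h(1) = 1`. -/
structure IsHaar (h : A →ₗ[k] k) : Prop where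
  left_inv : (TensorProduct.lid k A).toLinearMap ∘ₗ h.rTensor A ∘ₗ
      (Coalgebra.comul (R := k) (A := A)) = Algebra.linearMap k A ∘ₗ h
  right_inv : (TensorProduct.rid k A).toLinearMap ∘ₗ h.lTensor A ∘ₗ
      (Coalgebra.comul (R := k) (A := A)) = Algebra.linearMap k A ∘ₗ h
  map_one : h 1 = 1

/-- A Hopf algebra is cosemisimple iff it admits a Haar integral. -/
def IsCosemisimple (k : Type u) [Field k] (A : Type u) [Ring A] [HopfAlgebra k A] : Prop :=
  ∃ h : A →ₗ[k] k, IsHaar h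

/-- The modular automorphism `σ = ψ ∗ id ∗ ψ` associated to a functional `ψ`. -/
noncomputable def sigmaOf (ψ : A →ₗ[k] k) : A →ₗ[k] A := convL ψ (convR LinearMap.id ψ)

/-- A modular functional on a cosemisimple Hopf algebra with Haar integral `h`:
a convolution invertible functional `ψ` with `S² = ψ ∗ id ∗ ψ⁻¹`, such that
`σ = ψ ∗ id ∗ ψ` is an algebra automorphism and `h(ab) = h(b σ(a))`. -/
structure ModularFunctional (h : A →ₗ[k] k) : Type u where
  ψ : A →ₗ[k] k
  ψinv : A →ₗ[k] k
  inv_left : convF ψ ψinv = Coalgebra.counit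
  inv_right : convF ψinv ψ = Coalgebra.counit
  antipode_sq : (HopfAlgebra.antipode (R := k) (A := A)) ∘ₗ HopfAlgebra.antipode (R := k) (A := A)
      = convL ψ (convR LinearMap.id ψinv)
  sigma_one : sigmaOf ψ 1 = 1
  sigma_mul : ∀ a b : A, sigmaOf ψ (a * b) = sigmaOf ψ a * sigmaOf ψ b
  sigma_bijective : Function.Bijective (sigmaOf ψ)
  kms : ∀ a b : A, h (a * b) = h (b * sigmaOf ψ a)

variable {V W : Type u} [AddCommGroup V] [Module k V] [AddCommGroup W] [Module k W]

/-- The averaging of a linear map `f : V → W` between right `A`-comodules with respect to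
a linear functional `h` on `A`: `v ↦ h(f(v₍₀₎)₍₁₎ S(v₍₁₎)) f(v₍₀₎)₍₀₎`. -/
noncomputable def avg (ρV : V →ₗ[k] V ⊗[k] A) (ρW : W →ₗ[k] W ⊗[k] A)
    (h : A →ₗ[k] k) (f : V →ₗ[k] W) : V →ₗ[k] W :=
  (TensorProduct.rid k W).toLinearMap ∘ₗ h.lTensor W ∘ₗ (LinearMap.mul' k A).lTensor W ∘ₗ
    (TensorProduct.assoc k W A A).toLinearMap ∘ₗ ρW.rTensor A ∘ₗ
      (HopfAlgebra.antipode (R := k) (A := A)).lTensor W ∘ₗ f.rTensor A ∘ₗ ρV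

/-- The twist `ρ = id ∗ ψ⁻²` of a right comodule (algebra), `x ↦ ψ⁻²(x₍₁₎)x₍₀₎`. -/
noncomputable def comodTwist (φ : A →ₗ[k] k) (ρV : V →ₗ[k] V ⊗[k] A) : V →ₗ[k] V :=
  (TensorProduct.rid k V).toLinearMap ∘ₗ φ.lTensor V ∘ₗ ρV

/-- The twist `θ = ψ² ∗ id : A → A`. -/
noncomputable def thetaOf (φ : A →ₗ[k] k) : A →ₗ[k] A := convL φ LinearMap.id

end Haar


end QuesProj

/-! If `d = pd V` is finite, `Ext^(d+1)(V, -)` vanishes, so the long exact `Ext`-sequence makes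
`Ext^d(V, -)` right exact: an epimorphism `F ⟶ W` with `Ext^d(V, W) ≠ 0` forces
`Ext^d(V, F) ≠ 0`. Taking `F` in the generating class shows that the top degree `d` is already
detected by `F₀`, while every degree detected by `F₀` is at most `d` trivially. -/

open QuesProj CategoryTheory Limits

namespace ChainComplex

variable {C : Type*} [Category* C] [Abelian C] (R : Type*) [Ring R] [Linear R C]
  (Q : ChainComplex C ℕ)

noncomputable def linearYonedaObjMap {Y Z : C} (g : Y ⟶ Z) :
    Q.linearYonedaObj R Y ⟶ Q.linearYonedaObj R Z where
  f i := ModuleCat.ofHom (Linear.rightComp R (Q.X i) g)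
  comm' i j _ := by
    ext (f : Q.X i ⟶ Y)
    exact (Category.assoc _ _ _).symm

noncomputable def linearYonedaObjShortComplex (S : ShortComplex C) :
    ShortComplex (CochainComplex (ModuleCat R) ℕ) :=
  ShortComplex.mk (Q.linearYonedaObjMap R S.f) (Q.linearYonedaObjMap R S.g) (by
    ext i (f : Q.X i ⟶ S.X₁)
    show (f ≫ S.f) ≫ S.g = 0
    simp)

variable {R}

lemma shortExact_linearYonedaObjShortComplex [∀ i, Projective (Q.X i)] {S : ShortComplex C}
    (hS : S.ShortExact) : (Q.linearYonedaObjShortComplex R S).ShortExact := by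
  have := hS.mono_f
  refine HomologicalComplex.shortExact_of_degreewise_shortExact _ fun i => ?_
  refine { exact := ?_, mono_f := ?_, epi_g := ?_ }
  · rw [ShortComplex.moduleCat_exact_iff]
    intro (f : Q.X i ⟶ S.X₂) hf
    exact ⟨hS.exact.lift f hf, hS.exact.lift_f f hf⟩
  · rw [ModuleCat.mono_iff_injective]
    intro a b hab
    exact (cancel_mono S.f).1 hab
  · have := hS.epi_g
    rw [ModuleCat.epi_iff_surjective]
    intro (h : Q.X i ⟶ S.X₃)
    exact ⟨Projective.factorThru h S.g, Projective.factorThru_comp h S.g⟩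

lemma surjective_homologyMap_linearYonedaObjMap [∀ i, Projective (Q.X i)] {S : ShortComplex C}
    (hS : S.ShortExact) (n : ℕ) [Subsingleton ((Q.linearYonedaObj R S.X₁).homology (n + 1))] :
    Function.Surjective (HomologicalComplex.homologyMap (Q.linearYonedaObjMap R S.g) n) := by
  have hexact := (Q.shortExact_linearYonedaObjShortComplex (R := R) hS).homology_exact₃ n (n + 1)
    (by simp)
  rw [ShortComplex.moduleCat_exact_iff] at hexact
  exact fun y => hexact y
    (Subsingleton.elim (α := (Q.linearYonedaObj R S.X₁).homology (n + 1)) _ _)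

end ChainComplex

section Ext

variable {C : Type*} [Category* C] [Abelian C] {R : Type*} [Ring R] [Linear R C]
  [EnoughProjectives C]

lemma nontrivial_ext_of_shortExact {V : C} {S : ShortComplex C} (hS : S.ShortExact) (m : ℕ)
    [Nontrivial (((Ext R C m).obj (Opposite.op V)).obj S.X₃)]
    [Subsingleton (((Ext R C (m + 1)).obj (Opposite.op V)).obj S.X₁)] :
    Nontrivial (((Ext R C m).obj (Opposite.op V)).obj S.X₂) := by
  let P := ProjectiveResolution.of V
  have := P.projective
  have : Subsingleton ((P.complex.linearYonedaObj R S.X₁).homology (m + 1)) :=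
    (P.isoExt (m + 1) S.X₁).symm.toLinearEquiv.toEquiv.subsingleton
  have : Nontrivial ((P.complex.linearYonedaObj R S.X₃).homology m) :=
    (P.isoExt m S.X₃).symm.toLinearEquiv.toEquiv.nontrivial
  have : Nontrivial ((P.complex.linearYonedaObj R S.X₂).homology m) :=
    (P.complex.surjective_homologyMap_linearYonedaObjMap hS m).nontrivial
  exact (P.isoExt m S.X₂).toLinearEquiv.toEquiv.nontrivial

end Ext

namespace QuesProj

variable {C : Type (u+1)} [Category.{u} C] [Abelian C] [EnoughProjectives C]

lemma le_extPD {V W : C} {m : ℕ} (h : Nontrivial (((Ext ℤ C m).obj (Opposite.op V)).obj W)) :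
    (m : ℕ∞) ≤ extPD V :=
  le_sSup ⟨m, rfl, W, h⟩

lemma subsingleton_ext_of_extPD_lt {V : C} {n : ℕ} (h : extPD V < n) (W : C) :
    Subsingleton (((Ext ℤ C n).obj (Opposite.op V)).obj W) :=
  not_nontrivial_iff_subsingleton.mp fun hW => (le_extPD hW).not_gt h

lemma exists_nontrivial_ext_extPD_toNat {V W : C} {m : ℕ} (hfin : extPD V ≠ ⊤)
    (h : Nontrivial (((Ext ℤ C m).obj (Opposite.op V)).obj W)) :
    ∃ W₀ : C, Nontrivial (((Ext ℤ C (extPD V).toNat).obj (Opposite.op V)).obj W₀) := by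
  have : Nonempty {n : ℕ∞ | ∃ m : ℕ, n = (m : ℕ∞) ∧
      ∃ W : C, Nontrivial (((Ext ℤ C m).obj (Opposite.op V)).obj W)} := ⟨⟨m, m, rfl, W, h⟩⟩
  obtain ⟨d, hd, W₀, hW₀⟩ := ENat.sSup_mem_of_nonempty_of_lt_top hfin.lt_top
  exact ⟨W₀, by rwa [extPD, hd, ENat.toNat_natCast]⟩

end QuesProj

theorem pd_eq_sup_ext_generating_projectives_general {C : Type (u+1)} [Category.{u} C] [Abelian C]
    [EnoughProjectives C] (F₀ : Set C)
    (hgen : ∀ V : C, ∃ P ∈ F₀, ∃ f : P ⟶ V, Epi f)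
    (V : C) (hfin : extPD V ≠ ⊤) :
    extPD V = sSup {n : ℕ∞ | ∃ m : ℕ, n = (m : ℕ∞) ∧
      ∃ F ∈ F₀, Nontrivial (((Ext ℤ C m).obj (Opposite.op V)).obj F)} := by
  refine le_antisymm (sSup_le ?_) (sSup_le_sSup fun _ ⟨m, hn, F, _, hF⟩ => ⟨m, hn, F, hF⟩)
  rintro _ ⟨m, rfl, W, hW⟩
  set d := (extPD V).toNat
  obtain ⟨W₀, hW₀⟩ := exists_nontrivial_ext_extPD_toNat hfin hW
  obtain ⟨F, hF, p, _⟩ := hgen W₀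
  have hS : (ShortComplex.mk (kernel.ι p) p (kernel.condition p)).ShortExact :=
    { exact := ShortComplex.exact_kernel p }
  have hd : extPD V < (d + 1 : ℕ) := by
    rw [Nat.cast_add_one, ENat.natCast_toNat hfin]
    exact (ENat.lt_add_one_iff' hfin).mpr le_rfl
  have := subsingleton_ext_of_extPD_lt hd (kernel p)
  have hFd : Nontrivial (((Ext ℤ C d).obj (Opposite.op V)).obj F) :=
    nontrivial_ext_of_shortExact hS d
  calc (m : ℕ∞) ≤ extPD V := le_extPD hW
    _ = d := (ENat.natCast_toNat hfin).symm
    _ ≤ _ := le_sSup (by exact ⟨d, rfl, F, hF, hFd⟩)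

/-- In an abelian category with enough projectives, if `F₀` is a
generating class consisting of projective objects and `V` has finite projective dimension,
then `pd(V) = max {n : Ext^n(V, F) ≠ 0 for some F ∈ F₀}`. -/
theorem pd_eq_sup_ext_generating_projectives {C : Type (u+1)} [Category.{u} C] [Abelian C]
    [EnoughProjectives C] (F₀ : Set C)
    (hproj : ∀ P ∈ F₀, Projective P)
    (hgen : ∀ V : C, ∃ P ∈ F₀, ∃ f : P ⟶ V, Epi f)
    (V : C) (hfin : extPD V ≠ ⊤) :
    extPD V = sSup {n : ℕ∞ | ∃ m : ℕ, n = (m : ℕ∞) ∧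
      ∃ F ∈ F₀, Nontrivial (((Ext ℤ C m).obj (Opposite.op V)).obj F)} :=
  pd_eq_sup_ext_generating_projectives_general F₀ hgen V hfin
end

section
/- Let C and D be abelian categories having enough projective objects and let F: C → D be an exact functor preserving projective objects which is twisted separable, with autoequivalence Θ, class F, isomorphisms θ_P, and natural maps M, such that F contains a generating subclass F₀ consisting of projective objects. Then for all objects X, W of C there is a morphism Ext*_D(F(X), ΘF(W)) → Ext*_C(X,W) (induced by the maps M on a projective resolution), and this morphism is surjective whenever W belongs to F. In particular, for W in F, if Ext^n_C(X,W) ≠ 0 then Ext^n_D(F(X), ΘF(W)) ≠ 0. -/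
open TensorProduct CategoryTheory

universe u

namespace QuesProj

section Bimodule

attribute [local instance] TensorProduct.Algebra.module

variable (k : Type u) [Field k] (R : Type u) [Ring R] [Algebra k R]

attribute [local instance] envTower

end Bimodule


/-! ## Twisted separable functors and separable functors -/

section Functors

variable {C : Type (u+1)} {D : Type (u+1)} [Category.{u} C] [Category.{u} D]

/-- The data exhibiting a functor as twisted separable: an autoequivalence `Θ` of the
target, a generating class `cls` with isomorphisms `θ_P : F(P) ≅ Θ(F(P))`, and natural
retraction maps `M` with `M(θ_P) = id`. -/
structure TwistedSeparableData (F : C ⥤ D) where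
  Θ : D ⥤ D
  isEquiv : Θ.IsEquivalence
  cls : Set C
  generating : ∀ V : C, ∃ P ∈ cls, ∃ f : P ⟶ V, Epi f
  θ : ∀ P : C, P ∈ cls → (F.obj P ≅ Θ.obj (F.obj P))
  M : ∀ V W : C, (F.obj V ⟶ Θ.obj (F.obj W)) → (V ⟶ W)
  natural : ∀ {V' V W W' : C} (α : V' ⟶ V) (β : W ⟶ W') (f : F.obj V ⟶ Θ.obj (F.obj W)),
    α ≫ M V W f ≫ β = M V' W' (F.map α ≫ f ≫ Θ.map (F.map β))
  normal : ∀ (P : C) (hP : P ∈ cls), M P P (θ P hP).hom = 𝟙 P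

/-- A functor is twisted separable if it admits twisted separability data. -/
def TwistedSeparable (F : C ⥤ D) : Prop := Nonempty (TwistedSeparableData F)

/-- A separable functor in the sense of Năstăsescu-Van den Bergh-Van Oystaeyen:
there are natural retractions `Hom(F V, F W) → Hom(V, W)` of the action of `F`. -/
def IsSeparableFunctor (F : C ⥤ D) : Prop :=
  ∃ M : ∀ V W : C, (F.obj V ⟶ F.obj W) → (V ⟶ W),
    (∀ (V W : C) (f : V ⟶ W), M V W (F.map f) = f) ∧
    (∀ (V' V W W' : C) (α : V' ⟶ V) (β : W ⟶ W') (f : F.obj V ⟶ F.obj W),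
      α ≫ M V W f ≫ β = M V' W' (F.map α ≫ f ≫ F.map β))

end Functors

end QuesProj

open QuesProj CategoryTheory

/-! Resolve `X` by projectives `P•`; since `F` is exact and preserves projectives, `F P•` resolves
`F X`. The maps `M` commute with the differentials by naturality, so they form a cochain map
`Hom(F P•, Θ F W) ⟶ Hom(P•, W)` inducing `Ext_D(F X, Θ F W) → Ext_C(X, W)`. When `W` is in the
class, `f ↦ F f ≫ θ_W` is a cochain map in the other direction, and `M(F f ≫ θ_W) = f ≫ M(θ_W) = f`,
so the induced map is a split epimorphism. -/

open CategoryTheory.Limits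

namespace QuesProj.TwistedSeparableData

variable {C D : Type (u+1)} [Category.{u} C] [Category.{u} D] {F : C ⥤ D}
  (T : TwistedSeparableData F)

lemma comp_M {V' V W : C} (α : V' ⟶ V) (f : F.obj V ⟶ T.Θ.obj (F.obj W)) :
    α ≫ T.M V W f = T.M V' W (F.map α ≫ f) := by
  simpa using T.natural α (𝟙 W) f

lemma M_comp {V W W' : C} (f : F.obj V ⟶ T.Θ.obj (F.obj W)) (β : W ⟶ W') :
    T.M V W f ≫ β = T.M V W' (f ≫ T.Θ.map (F.map β)) := by
  simpa using T.natural (𝟙 V) β f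

lemma M_map_comp_θ {V W : C} (hW : W ∈ T.cls) (f : V ⟶ W) :
    T.M V W (F.map f ≫ (T.θ W hW).hom) = f := by
  rw [← comp_M, T.normal W hW, Category.comp_id]

/-- Lift `f` and `g` to `h : F V ⟶ Θ F (W ⊞ W)`; then `f + g = h ≫ Θ F (fst + snd)`, and
naturality of `M` in the target splits `M (f + g)`. -/
lemma M_add [Preadditive C] [HasBinaryBiproducts C] [Preadditive D] [F.Additive]
    [T.Θ.Additive] (V W : C) (f g : F.obj V ⟶ T.Θ.obj (F.obj W)) :
    T.M V W (f + g) = T.M V W f + T.M V W g := by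
  let h := f ≫ T.Θ.map (F.map biprod.inl) + g ≫ T.Θ.map (F.map (biprod.inr : W ⟶ W ⊞ W))
  have h_fst : h ≫ T.Θ.map (F.map biprod.fst) = f := by
    simp [h, ← Functor.map_comp]
  have h_snd : h ≫ T.Θ.map (F.map biprod.snd) = g := by
    simp [h, ← Functor.map_comp]
  calc T.M V W (f + g)
      = T.M V W (h ≫ T.Θ.map (F.map (biprod.fst + biprod.snd))) := by
        rw [Functor.map_add, Functor.map_add, Preadditive.comp_add, h_fst, h_snd]
    _ = T.M V (W ⊞ W) h ≫ biprod.fst + T.M V (W ⊞ W) h ≫ biprod.snd := by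
        rw [← M_comp, Preadditive.comp_add]
    _ = T.M V W f + T.M V W g := by
        rw [M_comp, M_comp, h_fst, h_snd]

def linearM [Preadditive C] [HasBinaryBiproducts C] [Preadditive D] [F.Additive]
    [T.Θ.Additive] (V W : C) : (F.obj V ⟶ T.Θ.obj (F.obj W)) →ₗ[ℤ] (V ⟶ W) :=
  (AddMonoidHom.mk' (T.M V W) (T.M_add V W)).toIntLinearMap

section Cochains

variable [Abelian C] [Abelian D] [F.Additive] {α : Type*} [AddRightCancelSemigroup α] [One α]

def linearYonedaObjM [T.Θ.Additive] (K : ChainComplex C α) (W : C) :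
    ChainComplex.linearYonedaObj ((F.mapHomologicalComplex _).obj K) ℤ (T.Θ.obj (F.obj W)) ⟶
      K.linearYonedaObj ℤ W where
  f i := ModuleCat.ofHom (T.linearM (K.X i) W)
  comm' i j _ := by
    ext f
    exact T.comp_M (K.d j i) f

def linearYonedaObjθ (K : ChainComplex C α) {W : C} (hW : W ∈ T.cls) :
    K.linearYonedaObj ℤ W ⟶
      ChainComplex.linearYonedaObj ((F.mapHomologicalComplex _).obj K) ℤ (T.Θ.obj (F.obj W)) where
  f i := ModuleCat.ofHom
    ((Preadditive.rightComp _ (T.θ W hW).hom).comp F.mapAddHom).toIntLinearMap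
  comm' i j _ := by
    ext f
    exact (F.map_comp_assoc _ _ _).symm

lemma linearYonedaObjθ_comp_M [T.Θ.Additive] (K : ChainComplex C α) {W : C} (hW : W ∈ T.cls) :
    T.linearYonedaObjθ K hW ≫ T.linearYonedaObjM K W = 𝟙 _ := by
  ext i f
  exact T.M_map_comp_θ hW f

end Cochains

section Ext

variable [Abelian C] [Abelian D] [EnoughProjectives C] [EnoughProjectives D]
  [F.Additive] [T.Θ.Additive] [F.PreservesProjectiveObjects] [F.PreservesHomology]

noncomputable def extM {X : C} (P : ProjectiveResolution X) (W : C) (n : ℕ) :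
    ((Ext ℤ D n).obj (Opposite.op (F.obj X))).obj (T.Θ.obj (F.obj W)) ⟶
      ((Ext ℤ C n).obj (Opposite.op X)).obj W :=
  ((F.mapProjectiveResolution P).isoExt n _).hom ≫
    HomologicalComplex.homologyMap (T.linearYonedaObjM P.complex W) n ≫ (P.isoExt n W).inv

lemma extM_surjective {X : C} (P : ProjectiveResolution X) {W : C} (hW : W ∈ T.cls) (n : ℕ) :
    Function.Surjective (T.extM P W n) := by
  have hsplit : HomologicalComplex.homologyMap (T.linearYonedaObjθ P.complex hW) n ≫
      HomologicalComplex.homologyMap (T.linearYonedaObjM P.complex W) n = 𝟙 _ := by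
    rw [← HomologicalComplex.homologyMap_comp, linearYonedaObjθ_comp_M,
      HomologicalComplex.homologyMap_id]
  have : Epi (HomologicalComplex.homologyMap (T.linearYonedaObjM P.complex W) n) :=
    epi_of_epi_fac hsplit
  rw [← ModuleCat.epi_iff_surjective, extM]
  exact epi_comp' inferInstance (epi_comp' this inferInstance)

end Ext

end QuesProj.TwistedSeparableData

theorem ext_surjection_of_twisted_separable_general {C D : Type (u+1)} [Category.{u} C]
    [Category.{u} D] [Abelian C] [Abelian D] [EnoughProjectives C] [EnoughProjectives D]
    (F : C ⥤ D) [Limits.PreservesFiniteLimits F] [Limits.PreservesFiniteColimits F]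
    (hproj : ∀ P : C, Projective P → Projective (F.obj P))
    (T : TwistedSeparableData F)
    (X W : C) (n : ℕ) :
    ∃ φ : (((Ext ℤ D n).obj (Opposite.op (F.obj X))).obj (T.Θ.obj (F.obj W))) →ₗ[ℤ]
        (((Ext ℤ C n).obj (Opposite.op X)).obj W),
      (W ∈ T.cls → Function.Surjective φ) ∧
      (W ∈ T.cls → Nontrivial (((Ext ℤ C n).obj (Opposite.op X)).obj W) →
        Nontrivial (((Ext ℤ D n).obj (Opposite.op (F.obj X))).obj (T.Θ.obj (F.obj W)))) := by
  have : F.Additive := Functor.additive_of_preserves_binary_products F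
  have := T.isEquiv
  have : T.Θ.Additive := Functor.additive_of_preserves_binary_products T.Θ
  have : F.PreservesProjectiveObjects := ⟨hproj _⟩
  let P := ProjectiveResolution.of X
  exact ⟨(T.extM P W n).hom, fun hW => T.extM_surjective P hW n,
    fun hW _ => (T.extM_surjective P hW n).nontrivial⟩

/-- Let `F : C ⥤ D` be an exact functor between abelian categories with
enough projectives, preserving projective objects, equipped with twisted separability data
whose class contains a generating subclass `F₀` of projectives. Then for all `X, W` and
`n` there is a (ℤ-linear) map `Ext^n_D(F X, Θ (F W)) → Ext^n_C(X, W)` which is surjective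
whenever `W` belongs to the class; in particular, for such `W`, if `Ext^n_C(X,W) ≠ 0` then
`Ext^n_D(F X, Θ (F W)) ≠ 0`. -/
theorem ext_surjection_of_twisted_separable {C D : Type (u+1)} [Category.{u} C]
    [Category.{u} D] [Abelian C] [Abelian D] [EnoughProjectives C] [EnoughProjectives D]
    (F : C ⥤ D) [Limits.PreservesFiniteLimits F] [Limits.PreservesFiniteColimits F]
    (hproj : ∀ P : C, Projective P → Projective (F.obj P))
    (T : TwistedSeparableData F)
    (F₀ : Set C) (hsub : F₀ ⊆ T.cls)
    (hproj₀ : ∀ P ∈ F₀, Projective P)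
    (hgen₀ : ∀ V : C, ∃ P ∈ F₀, ∃ f : P ⟶ V, Epi f)
    (X W : C) (n : ℕ) :
    ∃ φ : (((Ext ℤ D n).obj (Opposite.op (F.obj X))).obj (T.Θ.obj (F.obj W))) →ₗ[ℤ]
        (((Ext ℤ C n).obj (Opposite.op X)).obj W),
      (W ∈ T.cls → Function.Surjective φ) ∧
      (W ∈ T.cls → Nontrivial (((Ext ℤ C n).obj (Opposite.op X)).obj W) →
        Nontrivial (((Ext ℤ D n).obj (Opposite.op (F.obj X))).obj (T.Θ.obj (F.obj W)))) :=
  ext_surjection_of_twisted_separable_general F hproj T X W n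
end

section
/- Let A be a cosemisimple Hopf algebra over an algebraically closed field k, let V be a right A-comodule, let R be a right A-comodule algebra, and let ρ be the automorphism of R given by ρ(x) = ψ⁻²(x₍₁₎)x₍₀₎ for a modular functional ψ. Consider the linear map ρ_V = ρ⊗id_V⊗id_R on the free relative Hopf bimodule R⊗V⊗R. Then the averaging of ρ_V is the identity: M(ρ_V) = id_{R⊗V⊗R}. -/
open TensorProduct CategoryTheory

universe u

namespace QuesProj

section Bimodule

attribute [local instance] TensorProduct.Algebra.module

variable (k : Type u) [Field k] (R : Type u) [Ring R] [Algebra k R]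

attribute [local instance] envTower

end Bimodule


end QuesProj

open QuesProj

/-!
Averaging commutes with tensoring by the identity of a comodule `W`, because the coaction of `W`
cancels against the antipode: `w₍₀₎ ⊗ w₍₁₎S(w₍₂₎) = w ⊗ 1`. This reduces the claim to the twist
`ρ = id ∗ φ` of `R` alone, with `φ = ψ⁻²`. By coassociativity its average is again a twist,
by `a ↦ h((id ∗ φ)(a₍₁₎) S(a₍₂₎))`. The KMS property `h(xy) = h(yσ(x))` together with
`σ ∘ (id ∗ ψ⁻²) = ψ ∗ id ∗ ψ⁻¹ = S²` turns this functional into `a ↦ h(S(S(a₍₁₎)a₍₂₎)) = ε(a)`,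
and the twist by the counit is the identity.
-/

open Coalgebra LinearMap WithConv
open scoped RingTheory.LinearMap

namespace QuesProj

variable {k : Type u} [Field k] {A : Type u} [Ring A] [HopfAlgebra k A]

local notation "𝒮" => HopfAlgebra.antipode k (A := A)

lemma convL_eq_convMul (ψ : A →ₗ[k] k) (g : A →ₗ[k] A) :
    convL ψ g = (toConv (η ∘ₗ ψ) * toConv g).ofConv := by
  ext a
  simp [convL, (ℛ k a).convMul_apply, ← (ℛ k a).eq, Algebra.smul_def]

lemma convR_eq_convMul (g : A →ₗ[k] A) (ψ : A →ₗ[k] k) :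
    convR g ψ = (toConv g * toConv (η ∘ₗ ψ)).ofConv := by
  ext a
  simp [convR, (ℛ k a).convMul_apply, ← (ℛ k a).eq, Algebra.smul_def, Algebra.commutes]

lemma algebraLinearMap_comp_convF (ψ φ : A →ₗ[k] k) :
    toConv (η ∘ₗ convF ψ φ) = toConv (η ∘ₗ ψ) * toConv (η ∘ₗ φ : A →ₗ[k] A) :=
  WithConv.ext (algHom_comp_convMul_distrib (Algebra.ofId k A) (toConv ψ) (toConv φ))

lemma comp_convMul_algebraLinearMap {C B : Type*} [AddCommGroup C] [Module k C] [Coalgebra k C]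
    [Ring B] [Algebra k B] (g : B →ₗ[k] B) (f : C →ₗ[k] B) (φ : C →ₗ[k] k) :
    g ∘ₗ (toConv f * toConv (η ∘ₗ φ)).ofConv = (toConv (g ∘ₗ f) * toConv (η ∘ₗ φ)).ofConv := by
  ext a
  simp [(ℛ k a).convMul_apply, ← Algebra.commutes, ← Algebra.smul_def, map_sum]

lemma sigmaOf_comp_convMul_convF_inv {h : A →ₗ[k] k} (mf : ModularFunctional h) :
    sigmaOf mf.ψ ∘ₗ (toConv LinearMap.id * toConv (η ∘ₗ convF mf.ψinv mf.ψinv)).ofConv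
      = 𝒮 ∘ₗ 𝒮 := by
  -- `ψ ∗ id ∗ ψ ∗ ψ⁻¹ ∗ ψ⁻¹ = ψ ∗ id ∗ ψ⁻¹`
  rw [comp_convMul_algebraLinearMap, comp_id, mf.antipode_sq, sigmaOf, convL_eq_convMul,
    convR_eq_convMul, convL_eq_convMul, convR_eq_convMul]
  simp only [toConv_ofConv]
  rw [algebraLinearMap_comp_convF, mul_assoc, mul_assoc,
    ← mul_assoc (toConv (η ∘ₗ mf.ψ)) (toConv (η ∘ₗ mf.ψinv)), ← algebraLinearMap_comp_convF,
    mf.inv_left, ← LinearMap.convOne_def, one_mul]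

lemma haar_comp_convMul_antipode_eq_counit {h : A →ₗ[k] k} (h_one : h 1 = 1)
    {σ T : A →ₗ[k] A} (hkms : ∀ a b, h (a * b) = h (b * σ a)) (hσT : σ ∘ₗ T = 𝒮 ∘ₗ 𝒮) :
    h ∘ₗ (toConv T * toConv 𝒮).ofConv = ε := by
  -- `h(T(a₍₁₎)S(a₍₂₎)) = h(S(a₍₂₎)S²(a₍₁₎)) = h(S(S(a₍₁₎)a₍₂₎)) = ε(a) h(1)`
  ext a
  have hσT_apply (x : A) : σ (T x) = 𝒮 (𝒮 x) := congr($hσT x)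
  simp only [LinearMap.comp_apply, (ℛ k a).convMul_apply, map_sum, hkms, hσT_apply,
    ← HopfAlgebra.antipode_mul_antidistrib]
  rw [← map_sum, ← map_sum, HopfAlgebra.sum_antipode_mul_eq_smul]
  simp [h_one]

section Comodule

variable {V W : Type u} [AddCommGroup V] [Module k V] [AddCommGroup W] [Module k W]

/-- `w ⊗ a ↦ h(w₍₁₎S(a)) w₍₀₎`. -/
noncomputable def avgContraction (ρ : W →ₗ[k] W ⊗[k] A) (h : A →ₗ[k] k) : W ⊗[k] A →ₗ[k] W :=
  (TensorProduct.rid k W).toLinearMap ∘ₗ h.lTensor W ∘ₗ lTensor W μ ∘ₗ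
    (TensorProduct.assoc k W A A).toLinearMap ∘ₗ ρ.rTensor A ∘ₗ lTensor W 𝒮

lemma avg_eq_avgContraction_comp (ρV : V →ₗ[k] V ⊗[k] A) (ρW : W →ₗ[k] W ⊗[k] A)
    (h : A →ₗ[k] k) (f : V →ₗ[k] W) :
    avg ρV ρW h f = avgContraction ρW h ∘ₗ f.rTensor A ∘ₗ ρV := rfl

lemma RightCoaction.lTensor_convMul_comp (co : RightCoaction k A V) (T U : A →ₗ[k] A) :
    (toConv T * toConv U).ofConv.lTensor V ∘ₗ co.ρ
      = (μ ∘ₗ map T U).lTensor V ∘ₗ (TensorProduct.assoc k V A A).toLinearMap ∘ₗ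
          co.ρ.rTensor A ∘ₗ co.ρ := by
  rw [co.coassoc, LinearMap.convMul_def]
  simp only [lTensor_comp, comp_assoc]

lemma RightCoaction.lTensor_mul_antipode_coassoc (co : RightCoaction k A V) (v : V) :
    (μ ∘ₗ map LinearMap.id 𝒮).lTensor V
        (TensorProduct.assoc k V A A (co.ρ.rTensor A (co.ρ v))) = v ⊗ₜ 1 := by
  have hconv := congr($(co.lTensor_convMul_comp LinearMap.id 𝒮) v)
  simp only [LinearMap.comp_apply, LinearEquiv.coe_coe] at hconv
  have algebraMap_lTensor (x : V ⊗[k] k) : lTensor V η x = TensorProduct.rid k V x ⊗ₜ (1 : A) := by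
    induction x using TensorProduct.induction_on with
    | zero => simp
    | tmul v c => simp [Algebra.algebraMap_eq_smul_one, TensorProduct.smul_tmul]
    | add x y hx hy => simp_all [add_tmul]
  rw [← hconv, id_mul_antipode, LinearMap.convOne_def, ofConv_toConv, lTensor_comp,
    LinearMap.comp_apply, algebraMap_lTensor]
  congr 1
  exact congr($co.counit_comp v)

lemma RightCoaction.comp_comodTwist (co : RightCoaction k A V) (φ : A →ₗ[k] k) :
    co.ρ ∘ₗ comodTwist φ co.ρ
      = (toConv LinearMap.id * toConv (η ∘ₗ φ)).ofConv.lTensor V ∘ₗ co.ρ := by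
  rw [co.lTensor_convMul_comp, comodTwist]
  simp only [← comp_assoc]
  congr 1
  refine TensorProduct.ext' fun v a => ?_
  simp only [LinearMap.comp_apply, LinearEquiv.coe_coe, lTensor_tmul, rid_tmul, map_smul,
    rTensor_tmul]
  induction co.ρ v using TensorProduct.induction_on with
  | zero => simp
  | tmul v' b => simp [← Algebra.commutes, ← Algebra.smul_def]
  | add x y hx hy => simp_all [add_tmul]

lemma avg_eq_comodTwist_of_comp_eq (co : RightCoaction k A V) (h : A →ₗ[k] k)
    {f : V →ₗ[k] V} {T : A →ₗ[k] A} (hf : co.ρ ∘ₗ f = T.lTensor V ∘ₗ co.ρ) :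
    avg co.ρ co.ρ h f = comodTwist (h ∘ₗ (toConv T * toConv 𝒮).ofConv) co.ρ := by
  have key : avgContraction co.ρ h ∘ₗ f.rTensor A
      = (TensorProduct.rid k V).toLinearMap ∘ₗ h.lTensor V ∘ₗ (μ ∘ₗ map T 𝒮).lTensor V ∘ₗ
          (TensorProduct.assoc k V A A).toLinearMap ∘ₗ co.ρ.rTensor A := by
    refine TensorProduct.ext' fun v a => ?_
    simp only [avgContraction, LinearMap.comp_apply, LinearEquiv.coe_coe, rTensor_tmul,
      lTensor_tmul]
    rw [← LinearMap.comp_apply co.ρ f, hf, LinearMap.comp_apply]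
    induction co.ρ v using TensorProduct.induction_on with
    | zero => simp
    | tmul v' b => simp
    | add x y hx hy => simp_all [add_tmul]
  rw [avg_eq_avgContraction_comp, ← comp_assoc, key]
  simp only [comodTwist, lTensor_comp, comp_assoc, co.lTensor_convMul_comp]

end Comodule

section TensorComodule

variable {M W : Type u} [AddCommGroup M] [Module k M] [AddCommGroup W] [Module k W]

lemma rTensor_rTensor_comp_tensorCoactMap (ρM : M →ₗ[k] M ⊗[k] A) (ρW : W →ₗ[k] W ⊗[k] A)
    (g : M →ₗ[k] M) :
    (g.rTensor W).rTensor A ∘ₗ tensorCoactMap ρM ρW = tensorCoactMap (g.rTensor A ∘ₗ ρM) ρW := by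
  refine TensorProduct.ext' fun m w => ?_
  simp only [tensorCoactMap, LinearMap.comp_apply, LinearEquiv.coe_coe, map_tmul]
  induction ρM m using TensorProduct.induction_on with
  | zero => simp
  | add x y hx hy => simp_all [add_tmul]
  | tmul m' a =>
    induction ρW w using TensorProduct.induction_on with
    | zero => simp
    | add x y hx hy => simp_all [tmul_add]
    | tmul w' b => simp

lemma avgContraction_comp_tensorCoactMap (ρM : M →ₗ[k] M ⊗[k] A) (coW : RightCoaction k A W)
    (h : A →ₗ[k] k) (F : M →ₗ[k] M ⊗[k] A) :
    avgContraction (tensorCoactMap ρM coW.ρ) h ∘ₗ tensorCoactMap F coW.ρ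
      = (avgContraction ρM h ∘ₗ F).rTensor W := by
  refine TensorProduct.ext' fun m w => ?_
  simp only [tensorCoactMap, LinearMap.comp_apply, LinearEquiv.coe_coe, map_tmul, rTensor_tmul]
  induction F m using TensorProduct.induction_on with
  | zero => simp
  | add x y hx hy => simp_all [add_tmul]
  | tmul m' a =>
    -- `L e = h(m'₍₁₎ e S(a)) m'₍₀₎`; the coaction of `W` only enters through
    -- `w₍₀₎ ⊗ w₍₁₎S(w₍₂₎) = w ⊗ 1`.
    let L : A →ₗ[k] M := (TensorProduct.rid k M).toLinearMap ∘ₗ h.lTensor M ∘ₗ lTensor M μ ∘ₗ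
      (TensorProduct.assoc k M A A).toLinearMap ∘ₗ TensorProduct.mk k (M ⊗[k] A) A (ρM m') ∘ₗ
        mulRight k (𝒮 a)
    have hL : avgContraction (tensorCoactMap ρM coW.ρ) h
        (lTensor (M ⊗[k] W) μ (tensorTensorTensorComm k M A W A (m' ⊗ₜ a ⊗ₜ coW.ρ w)))
          = TensorProduct.comm k W M (lTensor W L ((μ ∘ₗ map LinearMap.id 𝒮).lTensor W
              (TensorProduct.assoc k W A A (coW.ρ.rTensor A (coW.ρ w))))) := by
      induction coW.ρ w using TensorProduct.induction_on with
      | zero => simp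
      | add x y hx hy => simp_all [tmul_add]
      | tmul w' b =>
        simp only [avgContraction, tensorCoactMap, L, LinearMap.comp_apply, LinearEquiv.coe_coe,
          tensorTensorTensorComm_tmul, lTensor_tmul, rTensor_tmul, map_tmul, mul'_apply,
          HopfAlgebra.antipode_mul_antidistrib]
        induction ρM m' using TensorProduct.induction_on with
        | zero => simp
        | add x y hx hy => simp_all [add_tmul, LinearMap.comp_add, LinearMap.add_comp, lTensor_add]
        | tmul m'' c =>
          induction coW.ρ w' using TensorProduct.induction_on with
          | zero => simp
          | add x y hx hy => simp_all [tmul_add, add_tmul]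
          | tmul w'' d => simp [mul_assoc]
    refine hL.trans ?_
    rw [coW.lTensor_mul_antipode_coassoc]
    simp [L, avgContraction]

lemma avg_tensorCoactMap_rTensor (ρM : M →ₗ[k] M ⊗[k] A) (coW : RightCoaction k A W)
    (h : A →ₗ[k] k) (g : M →ₗ[k] M) :
    avg (tensorCoactMap ρM coW.ρ) (tensorCoactMap ρM coW.ρ) h (g.rTensor W)
      = (avg ρM ρM h g).rTensor W := by
  rw [avg_eq_avgContraction_comp, avg_eq_avgContraction_comp, rTensor_rTensor_comp_tensorCoactMap,
    avgContraction_comp_tensorCoactMap]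

end TensorComodule
end QuesProj

theorem avg_twist_free_relhopf_eq_id_general (k A R V : Type u) [Field k]
    [Ring A] [HopfAlgebra k A] [Ring R] [Algebra k R] [AddCommGroup V] [Module k V]
    (h : A →ₗ[k] k) (hHaar : IsHaar h) (mf : ModularFunctional h)
    (c : RightComodAlg k A R) (coV : RightCoaction k A V) :
    avg (tensorCoactMap (tensorCoactMap c.ρ coV.ρ) c.ρ)
        (tensorCoactMap (tensorCoactMap c.ρ coV.ρ) c.ρ) h
        (((comodTwist (convF mf.ψinv mf.ψinv) c.ρ).rTensor V).rTensor R)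
      = LinearMap.id := by
  have h_twist : avg c.ρ c.ρ h (comodTwist (convF mf.ψinv mf.ψinv) c.ρ) = comodTwist ε c.ρ := by
    rw [← haar_comp_convMul_antipode_eq_counit hHaar.map_one mf.kms
      (sigmaOf_comp_convMul_convF_inv mf)]
    exact avg_eq_comodTwist_of_comp_eq c.toCoaction h (c.toCoaction.comp_comodTwist _)
  calc _ = ((avg c.ρ c.ρ h (comodTwist (convF mf.ψinv mf.ψinv) c.ρ)).rTensor V).rTensor R := by
        rw [← avg_tensorCoactMap_rTensor _ coV]
        exact avg_tensorCoactMap_rTensor _ c.toCoaction h _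
    _ = LinearMap.id := by
        rw [h_twist, show comodTwist ε c.ρ = LinearMap.id from c.counit_comp, rTensor_id,
          rTensor_id]

/-- For the free relative Hopf bimodule `R ⊗ V ⊗ R` over a cosemisimple
Hopf algebra, the averaging of `ρ ⊗ id_V ⊗ id_R` (where `ρ = id ∗ ψ⁻²` is the modular
twist of `R`) is the identity. -/
theorem avg_twist_free_relhopf_eq_id (k A R V : Type u) [Field k] [IsAlgClosed k]
    [Ring A] [HopfAlgebra k A] [Ring R] [Algebra k R] [AddCommGroup V] [Module k V]
    (h : A →ₗ[k] k) (hHaar : IsHaar h) (mf : ModularFunctional h)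
    (c : RightComodAlg k A R) (coV : RightCoaction k A V) :
    avg (tensorCoactMap (tensorCoactMap c.ρ coV.ρ) c.ρ)
        (tensorCoactMap (tensorCoactMap c.ρ coV.ρ) c.ρ) h
        (((comodTwist (convF mf.ψinv mf.ψinv) c.ρ).rTensor V).rTensor R)
      = LinearMap.id :=
  avg_twist_free_relhopf_eq_id_general k A R V h hHaar mf c coV
end
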